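/- Let g and w be independent standard Gaussian random variables, let ρ ∈ [-1,1], q = √(1-ρ²), and ĝ = ρg + qw. With φ(x) = max(x,0) the ReLU function, E[ φ(g)³ φ(ĝ) ] = ( q·(2 + ρ²) + 3ρ·arccos(-ρ) ) / (2π). -/

import Mathlib

open MeasureTheory ProbabilityTheory Real Set Filter
open scoped NNReal ENNReal

private lemma K31_aux_prod (F : ℝ × ℝ → ℝ) :
    ∫ p, F p ∂((gaussianReal 0 1).prod (gaussianReal 0 1))
    = ∫ p : ℝ × ℝ, (gaussianPDFReal 0 1 p.1 * gaussianPDFReal 0 1 p.2) * F p := by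
  have hprod : (gaussianReal 0 1).prod (gaussianReal 0 1)
      = (volume.prod (volume : Measure ℝ)).withDensity
          (fun p => gaussianPDF 0 1 p.1 * gaussianPDF 0 1 p.2) := by
    apply Measure.prod_eq
    intro s t hs ht
    rw [withDensity_apply _ (hs.prod ht), ← Measure.prod_restrict,
      lintegral_prod_mul (measurable_gaussianPDF 0 1).aemeasurable
        (measurable_gaussianPDF 0 1).aemeasurable,
      gaussianReal_apply _ one_ne_zero, gaussianReal_apply _ one_ne_zero]
  rw [hprod]
  have h1 : (fun p : ℝ × ℝ => gaussianPDF 0 1 p.1 * gaussianPDF 0 1 p.2)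
      = fun p : ℝ × ℝ => ((((gaussianPDFReal 0 1 p.1).toNNReal
          * (gaussianPDFReal 0 1 p.2).toNNReal : ℝ≥0)) : ℝ≥0∞) := by
    funext p
    simp [gaussianPDF, ENNReal.ofReal, ENNReal.coe_mul]
  have hm : Measurable fun p : ℝ × ℝ =>
      (gaussianPDFReal 0 1 p.1).toNNReal * (gaussianPDFReal 0 1 p.2).toNNReal :=
    (((measurable_gaussianPDFReal 0 1).comp measurable_fst).real_toNNReal).mul
      (((measurable_gaussianPDFReal 0 1).comp measurable_snd).real_toNNReal)
  rw [h1, integral_withDensity_eq_integral_smul hm]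
  congr 1
  funext p
  rw [NNReal.smul_def, NNReal.coe_mul,
    Real.coe_toNNReal _ (gaussianPDFReal_nonneg _ _ _),
    Real.coe_toNNReal _ (gaussianPDFReal_nonneg _ _ _), smul_eq_mul]

private lemma K31_aux_polar (ρ q : ℝ) :
    (∫ p : ℝ × ℝ, (gaussianPDFReal 0 1 p.1 * gaussianPDFReal 0 1 p.2)
        * ((max p.1 0) ^ 3 * max (ρ * p.1 + q * p.2) 0))
    = (∫ r in Ioi (0:ℝ), (2 * π)⁻¹ * (r ^ 5 * rexp (-(r ^ 2) / 2)))
      * ∫ θ in Ioo (-π) π, (max (cos θ) 0) ^ 3 * max (ρ * cos θ + q * sin θ) 0 := by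
  rw [← integral_comp_polarCoord_symm]
  have hT : polarCoord.target = Ioi (0:ℝ) ×ˢ Ioo (-π) π := rfl
  have hmT : MeasurableSet (Ioi (0:ℝ) ×ˢ Ioo (-π) π) :=
    measurableSet_Ioi.prod measurableSet_Ioo
  have hcongr : ∀ p ∈ Ioi (0:ℝ) ×ˢ Ioo (-π) π,
      p.1 • (gaussianPDFReal 0 1 (polarCoord.symm p).1
          * gaussianPDFReal 0 1 (polarCoord.symm p).2
          * (((polarCoord.symm p).1 ⊔ 0) ^ 3
            * ((ρ * (polarCoord.symm p).1 + q * (polarCoord.symm p).2) ⊔ 0)))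
      = ((2 * π)⁻¹ * (p.1 ^ 5 * rexp (-(p.1 ^ 2) / 2)))
          * ((max (cos p.2) 0) ^ 3 * max (ρ * cos p.2 + q * sin p.2) 0) := by
    rintro ⟨r, θ⟩ ⟨hr, hθ⟩
    have hr0 : (0:ℝ) ≤ r := (le_of_lt hr)
    have hsymm : polarCoord.symm (r, θ) = (r * cos θ, r * sin θ) := rfl
    rw [hsymm]
    simp only [gaussianPDFReal, NNReal.coe_one, mul_one, sub_zero, smul_eq_mul]
    have h1 : max (r * cos θ) 0 = r * max (cos θ) 0 := by
      rw [mul_max_of_nonneg _ _ hr0, mul_zero]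
    have h2 : max (ρ * (r * cos θ) + q * (r * sin θ)) 0
        = r * max (ρ * cos θ + q * sin θ) 0 := by
      rw [mul_max_of_nonneg _ _ hr0, mul_zero]
      ring_nf
    have h5 : (Real.sqrt (2 * π))⁻¹ * rexp (-(r * cos θ) ^ 2 / 2)
        * ((Real.sqrt (2 * π))⁻¹ * rexp (-(r * sin θ) ^ 2 / 2))
        = (2 * π)⁻¹ * rexp (-(r ^ 2) / 2) := by
      rw [mul_mul_mul_comm, ← mul_inv, Real.mul_self_sqrt (by positivity), ← Real.exp_add]
      have harg : -(r * cos θ) ^ 2 / 2 + -(r * sin θ) ^ 2 / 2 = -(r ^ 2) / 2 := by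
        nlinarith [sin_sq_add_cos_sq θ]
      rw [harg]
    rw [h1, h2, h5]
    ring
  rw [hT, setIntegral_congr_fun hmT hcongr]
  rw [Measure.volume_eq_prod, ← setIntegral_prod_mul]

private lemma K31_aux_radial : ∫ r in Ioi (0:ℝ), r ^ 5 * rexp (-(r ^ 2) / 2) = 8 := by
  have hint : IntegrableOn (fun r : ℝ => r ^ 5 * rexp (-(r ^ 2) / 2)) (Ioi 0) := by
    have h := integrableOn_rpow_mul_exp_neg_mul_sq (b := 1/2) (by norm_num) (s := 5) (by norm_num)
    refine h.congr_fun (fun x hx => ?_) measurableSet_Ioi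
    beta_reduce
    rw [show (5:ℝ) = ((5:ℕ):ℝ) by norm_num, Real.rpow_natCast]
    ring_nf
  have hderiv : ∀ r ∈ Ici (0:ℝ),
      HasDerivAt (fun r : ℝ => -((r ^ 4 + 4 * r ^ 2 + 8) * rexp (-(r ^ 2) / 2)))
        (r ^ 5 * rexp (-(r ^ 2) / 2)) r := by
    intro r _
    have hexp : HasDerivAt (fun r : ℝ => rexp (-(r ^ 2) / 2))
        (rexp (-(r ^ 2) / 2) * (-r)) r := by
      have harg : HasDerivAt (fun r : ℝ => -(r ^ 2) / 2) (-r) r := by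
        have := (hasDerivAt_pow 2 r).neg.div_const 2
        exact this.congr_deriv (by ring)
      exact harg.exp
    have hpoly : HasDerivAt (fun r : ℝ => r ^ 4 + 4 * r ^ 2 + 8)
        (4 * r ^ 3 + 8 * r) r := by
      have := ((hasDerivAt_pow 4 r).add ((hasDerivAt_pow 2 r).const_mul 4)).add_const 8
      exact this.congr_deriv (by ring)
    have := (hpoly.mul hexp).neg
    exact this.congr_deriv (by ring)
  have htend : Tendsto (fun r : ℝ => -((r ^ 4 + 4 * r ^ 2 + 8) * rexp (-(r ^ 2) / 2)))
      atTop (nhds 0) := by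
    have houter : Tendsto (fun u : ℝ => -((4 * u ^ 2 + 8 * u + 8) * rexp (-u)))
        atTop (nhds 0) := by
      have h2 : Tendsto (fun u : ℝ => u ^ 2 * rexp (-u)) atTop (nhds 0) :=
        tendsto_pow_mul_exp_neg_atTop_nhds_zero 2
      have h1 : Tendsto (fun u : ℝ => u ^ 1 * rexp (-u)) atTop (nhds 0) :=
        tendsto_pow_mul_exp_neg_atTop_nhds_zero 1
      have h0 : Tendsto (fun u : ℝ => rexp (-u)) atTop (nhds 0) :=
        tendsto_exp_neg_atTop_nhds_zero
      have := (((h2.const_mul 4).add (h1.const_mul 8)).add (h0.const_mul 8)).neg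
      simp only [pow_one, mul_zero, add_zero, neg_zero] at this
      convert this using 2 with u
      ring
    have hcomp := houter.comp (tendsto_atTop_mono (fun r : ℝ => le_refl (r ^ 2 / 2))
      ((tendsto_pow_atTop (by norm_num : 2 ≠ 0)).atTop_div_const (by norm_num)))
    convert hcomp using 2 with r
    simp only [Function.comp]
    ring_nf
  rw [integral_Ioi_of_hasDerivAt_of_tendsto' hderiv hint htend]
  norm_num

private lemma K31_aux_angular (ρ : ℝ) (hρ : ρ ∈ Icc (-1:ℝ) 1) :
    ∫ θ in Ioo (-π) π, (max (cos θ) 0) ^ 3 * max (ρ * cos θ + Real.sqrt (1 - ρ ^ 2) * sin θ) 0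
    = (Real.sqrt (1 - ρ ^ 2) * (2 + ρ ^ 2) + 3 * ρ * Real.arccos (-ρ)) / 8 := by
  obtain ⟨hρ1, hρ2⟩ := hρ
  set q : ℝ := Real.sqrt (1 - ρ ^ 2) with hq
  set α : ℝ := Real.arcsin ρ with hα
  have hq0 : 0 ≤ q := Real.sqrt_nonneg _
  have hq2 : q ^ 2 = 1 - ρ ^ 2 := Real.sq_sqrt (by nlinarith)
  have hsinα : Real.sin α = ρ := Real.sin_arcsin hρ1 hρ2
  have hcosα : Real.cos α = q := Real.cos_arcsin ρ
  have hα1 : -(π/2) ≤ α := (Real.arcsin_mem_Icc ρ).1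
  have hα2 : α ≤ π/2 := (Real.arcsin_mem_Icc ρ).2
  have hπ := Real.pi_pos
  -- identity for the linear form
  have hlin : ∀ θ : ℝ, ρ * cos θ + q * sin θ = Real.sin (α + θ) := by
    intro θ
    rw [Real.sin_add, hsinα, hcosα]
  -- Step 1: shrink the domain
  have hsub : Ioo (-α) (π/2) ⊆ Ioo (-π) π := by
    intro x hx
    constructor <;> [linarith [hx.1]; linarith [hx.2]]
  have hzero : ∀ᵐ θ ∂(volume : Measure ℝ), θ ∈ Ioo (-π) π \ Ioo (-α) (π/2) →
      (max (cos θ) 0) ^ 3 * max (ρ * cos θ + q * sin θ) 0 = 0 := by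
    refine ae_of_all _ fun θ hθ => ?_
    obtain ⟨⟨hθ1, hθ2⟩, hθ3⟩ := hθ
    by_cases hc : cos θ ≤ 0
    · rw [max_eq_right hc]
      norm_num
    · push_neg at hc
      have hθ4 : θ < π / 2 := by
        by_contra h
        push_neg at h
        exact absurd (Real.cos_nonpos_of_pi_div_two_le_of_le h (by linarith)) (by linarith)
      have hθ5 : -(π/2) < θ := by
        by_contra h
        push_neg at h
        have : Real.cos (-θ) ≤ 0 :=
          Real.cos_nonpos_of_pi_div_two_le_of_le (by linarith) (by linarith)
        rw [Real.cos_neg] at this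
        linarith
      have hθ6 : θ ≤ -α := by
        by_contra h
        push_neg at h
        exact hθ3 ⟨h, hθ4⟩
      have : Real.sin (α + θ) ≤ 0 :=
        Real.sin_nonpos_of_nonpos_of_neg_pi_le (by linarith) (by linarith)
      rw [hlin θ, max_eq_right this, mul_zero]
  rw [setIntegral_eq_of_subset_of_ae_diff_eq_zero measurableSet_Ioo.nullMeasurableSet
    hsub hzero]
  -- Step 2: remove the max on the smaller interval
  have hcongr : ∀ θ ∈ Ioo (-α) (π/2),
      (max (cos θ) 0) ^ 3 * max (ρ * cos θ + q * sin θ) 0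
      = cos θ ^ 3 * (ρ * cos θ + q * sin θ) := by
    intro θ hθ
    obtain ⟨h1, h2⟩ := hθ
    have hc : 0 < cos θ := Real.cos_pos_of_mem_Ioo ⟨by linarith, h2⟩
    have hs : 0 < Real.sin (α + θ) :=
      Real.sin_pos_of_pos_of_lt_pi (by linarith) (by linarith)
    rw [max_eq_left hc.le, hlin θ, max_eq_left hs.le, ← hlin θ]
  rw [setIntegral_congr_fun measurableSet_Ioo hcongr]
  -- Step 3: interval integral and FTC
  have hle : -α ≤ π/2 := by linarith
  rw [← integral_Ioc_eq_integral_Ioo, ← intervalIntegral.integral_of_le hle]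
  set H : ℝ → ℝ := fun θ =>
    ρ * (3 * θ / 8 + Real.sin (2 * θ) / 4 + Real.sin (2 * (2 * θ)) / 32) - q * cos θ ^ 4 / 4
    with hH
  have hderiv : ∀ θ ∈ uIcc (-α) (π/2),
      HasDerivAt H (cos θ ^ 3 * (ρ * cos θ + q * sin θ)) θ := by
    intro θ _
    have h2θ : HasDerivAt (fun θ : ℝ => Real.sin (2 * θ)) (Real.cos (2 * θ) * 2) θ := by
      have := ((hasDerivAt_id θ).const_mul 2).sin
      simp only [id_eq, mul_one] at this
      exact this
    have h4θ : HasDerivAt (fun θ : ℝ => Real.sin (2 * (2 * θ)))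
        (Real.cos (2 * (2 * θ)) * 4) θ := by
      have := (((hasDerivAt_id θ).const_mul 2).const_mul 2).sin
      simp only [id_eq] at this
      convert this using 1
      ring
    have hlinθ : HasDerivAt (fun θ : ℝ => 3 * θ / 8) (3 / 8) θ := by
      have := ((hasDerivAt_id θ).const_mul 3).div_const 8
      exact this.congr_deriv (by ring)
    have hcos4 : HasDerivAt (fun θ : ℝ => cos θ ^ 4)
        (4 * cos θ ^ 3 * -Real.sin θ) θ := by
      have := (Real.hasDerivAt_cos θ).pow 4
      exact this.congr_deriv (by norm_num)
    have := (((hlinθ.add (h2θ.div_const 4)).add (h4θ.div_const 32)).const_mul ρ).sub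
      ((hcos4.const_mul q).div_const 4)
    exact this.congr_deriv (by
      rw [Real.cos_two_mul (2 * θ), Real.cos_two_mul θ]
      ring)
  have hcont : IntervalIntegrable (fun θ => cos θ ^ 3 * (ρ * Real.cos θ + q * Real.sin θ))
      volume (-α) (π/2) := by
    apply Continuous.intervalIntegrable
    fun_prop
  rw [intervalIntegral.integral_eq_sub_of_hasDerivAt hderiv hcont]
  -- Step 4: evaluate
  have harccos : Real.arccos (-ρ) = π / 2 + α := by
    rw [Real.arccos_neg, Real.arccos_eq_pi_div_two_sub_arcsin, ← hα]
    ring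
  rw [harccos, hH]
  simp only [Real.cos_pi_div_two, Real.cos_neg, Real.sin_neg, hcosα]
  rw [show (2 : ℝ) * (π / 2) = π by ring, Real.sin_pi, Real.sin_two_pi]
  rw [show (2 : ℝ) * -α = -(2 * α) by ring, Real.sin_neg,
    show (2 : ℝ) * -(2 * α) = -(2 * (2 * α)) by ring, Real.sin_neg,
    Real.sin_two_mul (2 * α), Real.sin_two_mul α, Real.cos_two_mul α, hsinα, hcosα]
  linear_combination (q * (q ^ 2 + 1) / 4) * hq2

/-- mixed Cho–Saul kernel `K_{3,1}(ρ) = E[φ(g)³φ(ĝ)]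
= (q(2+ρ²) + 3ρ arccos(-ρ))/(2π)` for the ReLU `φ(x) = max(x,0)`, where `g, w`
are independent standard Gaussians, `q = √(1-ρ²)` and `ĝ = ρg + qw`. -/
theorem relu_kernel_K31 (ρ : ℝ) (hρ : ρ ∈ Set.Icc (-1 : ℝ) 1) :
    (∫ p : ℝ × ℝ,
        (max p.1 0) ^ 3 * max (ρ * p.1 + Real.sqrt (1 - ρ ^ 2) * p.2) 0
      ∂((gaussianReal 0 1).prod (gaussianReal 0 1)))
    = (Real.sqrt (1 - ρ ^ 2) * (2 + ρ ^ 2) + 3 * ρ * Real.arccos (-ρ)) / (2 * π) := by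
  rw [K31_aux_prod, K31_aux_polar, integral_const_mul, K31_aux_radial,
    K31_aux_angular ρ hρ]
  have hπ := Real.pi_pos
  field_simp
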